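/- arXiv:2211.01826 — 3 statements merged into one kernel-verified Lean document; each statement's English description precedes it below -/
import Mathlib

section
/- A lens is a monomorphism in the category Lens if and only if its get functor is a cosieve; moreover every cosieve is the get functor of exactly one lens, so the forgetful functor U : Lens → Cat restricts to a bijection between monic lenses and cosieves. -/
universe u

open CategoryTheory CategoryTheory.Limits

namespace LensPaper

section OutDefs

variable {A : Type*} [Category A] {B : Type*} [Category B] {C : Type*} [Category C]

/-- The "out-set" of an object: the collection of all morphisms out of `X`,
bundled with their targets. -/
def Out (X : A) : Type _ := Σ Y : A, X ⟶ Y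

/-- The identity element of an out-set. -/
def Out.id (X : A) : Out X := ⟨X, 𝟙 X⟩

/-- Composition of a morphism out of `X` with a morphism out of its target. -/
def Out.comp {X : A} (u : Out X) (v : Out u.1) : Out X := ⟨v.1, u.2 ≫ v.2⟩

/-- Transport of out-sets along an equality of objects. -/
def Out.cast {X Y : A} (h : X = Y) (u : Out X) : Out Y := ⟨u.1, eqToHom h.symm ≫ u.2⟩

@[simp] theorem Out.cast_rfl {X : A} (u : Out X) : Out.cast rfl u = u := by
  cases u; simp [Out.cast]; rfl

theorem Out.cast_cast {X Y Z : A} (h₁ : X = Y) (h₂ : Y = Z) (u : Out X) :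
    Out.cast h₂ (Out.cast h₁ u) = Out.cast (h₁.trans h₂) u := by
  subst h₁; subst h₂; simp

/-- The action of a functor on out-sets. -/
def mapOut (F : A ⥤ B) {X : A} (u : Out X) : Out (F.obj X) := ⟨F.obj u.1, F.map u.2⟩

theorem mapOut_cast (F : A ⥤ B) {X Y : A} (h : X = Y) (u : Out X) :
    mapOut F (Out.cast h u) = Out.cast (congrArg F.obj h) (mapOut F u) := by
  subst h; simp

/-- The set of all morphisms of a category, bundled with their endpoints. -/
def Mor (A : Type*) [Category A] : Type _ := Σ (X Y : A), X ⟶ Y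

/-- The action of a functor on morphisms, as a function on bundled morphisms. -/
def mapMor (F : A ⥤ B) : Mor A → Mor B := fun m => ⟨F.obj m.1, F.obj m.2.1, F.map m.2.2⟩

/-- The set of composable pairs of morphisms of a category. -/
def CompPair (A : Type*) [Category A] : Type _ := Σ (X Y Z : A), (X ⟶ Y) × (Y ⟶ Z)

/-- The action of a functor on composable pairs. -/
def mapCompPair (F : A ⥤ B) : CompPair A → CompPair B :=
  fun p => ⟨F.obj p.1, F.obj p.2.1, F.obj p.2.2.1, (F.map p.2.2.2.1, F.map p.2.2.2.2)⟩

/-- A functor is a discrete opfibration if every morphism out of `F.obj X`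
has a unique lift to a morphism out of `X`. -/
def IsDiscreteOpfibration (F : A ⥤ B) : Prop :=
  ∀ (X : A) (u : Out (F.obj X)), ∃! v : Out X, mapOut F v = u

/-- A cosieve is an injective-on-objects discrete opfibration. -/
def IsCosieve (F : A ⥤ B) : Prop :=
  IsDiscreteOpfibration F ∧ Function.Injective F.obj

end OutDefs

/-- An (asymmetric delta) lens: a get functor together with put functions
satisfying PutGet, PutId and PutPut. -/
structure DLens (A : Type*) (B : Type*) [Category A] [Category B] where
  get : A ⥤ B
  put : ∀ (X : A), Out (get.obj X) → Out X
  putGet : ∀ (X : A) (u : Out (get.obj X)), mapOut get (put X u) = u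
  putId : ∀ (X : A), put X (Out.id (get.obj X)) = Out.id X
  putPut : ∀ (X : A) (u : Out (get.obj X)) (v : Out u.1) (h : u.1 = get.obj (put X u).1),
      put X (u.comp v) = (put X u).comp (put (put X u).1 (Out.cast h v))

namespace DLens

variable {A : Type*} [Category A] {B : Type*} [Category B] {C : Type*} [Category C]

theorem put_cast (F : DLens A B) {X₁ X₂ : A} (e : X₁ = X₂) (u : Out (F.get.obj X₁)) :
    Out.cast e (F.put X₁ u) = F.put X₂ (Out.cast (congrArg F.get.obj e) u) := by
  subst e; simp

/-- The identity lens. -/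
def id (A : Type*) [Category A] : DLens A A where
  get := Functor.id A
  put X u := u
  putGet X u := rfl
  putId X := rfl
  putPut X u v h := by
    have hv : Out.cast h v = v := Out.cast_rfl v
    rw [hv]

/-- Composition of lenses. -/
def comp (F : DLens A B) (G : DLens B C) : DLens A C where
  get := F.get ⋙ G.get
  put X u := F.put X (G.put (F.get.obj X) u)
  putGet X u := by
    show mapOut G.get (mapOut F.get (F.put X (G.put (F.get.obj X) u))) = u
    rw [F.putGet, G.putGet]
  putId X := by
    show F.put X (G.put (F.get.obj X) (Out.id (G.get.obj (F.get.obj X)))) = Out.id X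
    rw [G.putId, F.putId]
  putPut X u v h := by
    have h₁ : u.1 = G.get.obj (G.put (F.get.obj X) u).1 :=
      (congrArg Sigma.fst (G.putGet (F.get.obj X) u)).symm
    show F.put X (G.put (F.get.obj X) (u.comp v)) = _
    rw [G.putPut (F.get.obj X) u v h₁]
    have h₂ : (G.put (F.get.obj X) u).1 =
        F.get.obj (F.put X (G.put (F.get.obj X) u)).1 :=
      (congrArg Sigma.fst (F.putGet X (G.put (F.get.obj X) u))).symm
    rw [F.putPut X (G.put (F.get.obj X) u) _ h₂]
    rw [put_cast G h₂, Out.cast_cast]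

end DLens

/-- The category of small categories and (asymmetric delta) lenses. -/
def LensCat : Type (u + 1) := Cat.{u, u}

/-- Regard a small category as an object of the category of lenses. -/
def LensCat.of (C : Cat.{u, u}) : LensCat.{u} := C

/-- The underlying small category of an object of the category of lenses. -/
def LensCat.toCat (A : LensCat.{u}) : Cat.{u, u} := A

instance : Category.{u} LensCat.{u} where
  Hom A B := DLens A.toCat B.toCat
  id A := DLens.id A.toCat
  comp F G := F.comp G
  id_comp F := rfl
  comp_id F := rfl
  assoc F G H := rfl

/-- The get functor of a lens, i.e. a morphism of `LensCat` regarded as a `DLens`. -/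
def LensCat.get {A B : LensCat.{u}} (F : A ⟶ B) : A.toCat ⟶ B.toCat := (DLens.get F).toCatHom

/-- The identity-on-objects forgetful functor from the category of lenses to the
category of small categories and functors, sending a lens to its get functor. -/
def lensForget : LensCat.{u} ⥤ Cat.{u, u} where
  obj A := A.toCat
  map F := (DLens.get F).toCatHom
  map_id A := rfl
  map_comp F G := rfl

end LensPaper
open CategoryTheory CategoryTheory.Limits LensPaper

/-!
A monic lens `F` is cancelled against the two projection lenses out of the strict kernel pair
`A ×_B A` of its get functor, each of which puts along `F` on the other side: their composites
with `F` agree, so the two projections coincide. Then two morphisms out of one object with the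
same image under `F` are equal, and so are two objects with the same image; hence `F` is a
cosieve. Conversely, a put along a discrete opfibration is determined by its image: this gives
right cancellability of a cosieve (which on get functors is faithful and injective on objects)
and the uniqueness of a lens structure on it.
-/
namespace LensPaper

section Out

variable {A : Type*} [Category A] {B : Type*} [Category B]

theorem Out.ext {X : A} {u v : Out X} (h : u.1 = v.1) (h₂ : u.2 ≫ eqToHom h = v.2) :
    u = v := by
  obtain ⟨Y, f⟩ := u
  obtain ⟨Z, g⟩ := v
  dsimp only at h h₂
  subst h
  rw [eqToHom_refl, Category.comp_id] at h₂
  rw [h₂]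

theorem Out.snd_eq {X : A} {u v : Out X} (h : u = v) :
    u.2 ≫ eqToHom (congrArg Sigma.fst h) = v.2 := by
  subst h
  simp

theorem Out.cast_id {X Y : A} (h : X = Y) : Out.cast h (Out.id X) = Out.id Y := by
  subst h
  simp

theorem Out.cast_comp {X Y : A} (h : X = Y) (u : Out X) (v : Out u.1) :
    Out.cast h (u.comp v) = (Out.cast h u).comp v :=
  congrArg (Sigma.mk _) (Category.assoc _ _ _).symm

theorem Out.comp_congr {X : A} {u u' : Out X} (h : u = u') (v : Out u.1) :
    u.comp v = u'.comp (Out.cast (congrArg Sigma.fst h) v) := by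
  subst h
  simp

theorem mapOut_id (F : A ⥤ B) (X : A) : mapOut F (Out.id X) = Out.id (F.obj X) :=
  congrArg (Sigma.mk _) (F.map_id X)

theorem mapOut_comp (F : A ⥤ B) {X : A} (u : Out X) (v : Out u.1) :
    mapOut F (u.comp v) = (mapOut F u).comp (mapOut F v) :=
  congrArg (Sigma.mk _) (F.map_comp u.2 v.2)

theorem mapOut_congr {F₁ F₂ : A ⥤ B} (h : F₁ = F₂) {X : A} (v : Out X) :
    mapOut F₂ v = Out.cast (congrArg (fun G : A ⥤ B => G.obj X) h) (mapOut F₁ v) := by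
  subst h
  simp

end Out

section DiscreteOpfibration

variable {A : Type*} [Category A] {B : Type*} [Category B] {Φ : A ⥤ B}

theorem IsDiscreteOpfibration.eq_of_mapOut_eq (hΦ : IsDiscreteOpfibration Φ) {X : A}
    {v w : Out X} (h : mapOut Φ v = mapOut Φ w) : v = w :=
  (hΦ X (mapOut Φ w)).unique h rfl

theorem IsDiscreteOpfibration.faithful (hΦ : IsDiscreteOpfibration Φ) : Φ.Faithful where
  map_injective {X Y} a a' h := by
    have := hΦ.eq_of_mapOut_eq (v := ⟨Y, a⟩) (w := ⟨Y, a'⟩) (congrArg (Sigma.mk _) h)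
    exact eq_of_heq (Sigma.mk.inj this).2

theorem _root_.CategoryTheory.Functor.eq_of_comp_eq_of_injective {Z : Type*} [Category Z]
    {G H : Z ⥤ A} (hobj : Function.Injective Φ.obj) [Φ.Faithful] (h : G ⋙ Φ = H ⋙ Φ) : G = H :=
  CategoryTheory.Functor.ext (fun c => hobj (Functor.congr_obj h c)) fun c c' f =>
    Φ.map_injective (by simpa [eqToHom_map] using Functor.congr_hom h f)

end DiscreteOpfibration

namespace DLens

variable {A : Type*} [Category A] {B : Type*} [Category B]

theorem ext_of_put {F₁ F₂ : DLens A B} (h : F₁.get = F₂.get)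
    (hput : ∀ (X : A) (u : Out (F₁.get.obj X)),
      F₁.put X u = F₂.put X (Out.cast (congrArg (fun G : A ⥤ B => G.obj X) h) u)) :
    F₁ = F₂ := by
  obtain ⟨get, put₁, _, _, _⟩ := F₁
  obtain ⟨_, put₂, _, _, _⟩ := F₂
  dsimp only at h hput
  subst h
  obtain rfl : put₁ = put₂ := funext fun X => funext fun u => by simpa using hput X u
  rfl

theorem put_congr {F₁ F₂ : DLens A B} (h : F₁ = F₂) (X : A) (u : Out (F₁.get.obj X)) :
    F₁.put X u = F₂.put X (Out.cast (congrArg (fun G : DLens A B => G.get.obj X) h) u) := by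
  subst h
  simp

theorem isDiscreteOpfibration_of_mapOut_injective (F : DLens A B)
    (h : ∀ X : A, Function.Injective (mapOut F.get (X := X))) : IsDiscreteOpfibration F.get :=
  fun X u => ⟨F.put X u, F.putGet X u, fun _ hv => h X (hv.trans (F.putGet X u).symm)⟩

theorem put_eq_of_mapOut_eq (F : DLens A B) (hF : IsDiscreteOpfibration F.get) {X : A}
    {u : Out (F.get.obj X)} {v : Out X} (h : mapOut F.get v = u) : F.put X u = v :=
  hF.eq_of_mapOut_eq ((F.putGet X u).trans h.symm)

theorem putPut_cast (F : DLens A B) {X : A} {Y : B} (e : Y = F.get.obj X) (u : Out Y)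
    (v : Out u.1) (h : u.1 = F.get.obj (F.put X (Out.cast e u)).1) :
    F.put X (Out.cast e (u.comp v)) = (F.put X (Out.cast e u)).comp (F.put _ (Out.cast h v)) := by
  rw [Out.cast_comp]
  exact F.putPut X (Out.cast e u) v h

theorem eq_of_get_eq {F₁ F₂ : DLens A B} (hF₁ : IsDiscreteOpfibration F₁.get)
    (h : F₁.get = F₂.get) : F₁ = F₂ :=
  ext_of_put h fun X u => (F₂.put_eq_of_mapOut_eq (h ▸ hF₁) <| by
    rw [mapOut_congr h, F₁.putGet]).symm

noncomputable def ofDiscreteOpfibration (Φ : A ⥤ B) (hΦ : IsDiscreteOpfibration Φ) :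
    DLens A B where
  get := Φ
  put X u := (hΦ X u).exists.choose
  putGet X u := (hΦ X u).exists.choose_spec
  putId X := hΦ.eq_of_mapOut_eq <| by rw [(hΦ X _).exists.choose_spec, mapOut_id]
  putPut X u v h := hΦ.eq_of_mapOut_eq <| by
    rw [(hΦ X _).exists.choose_spec, mapOut_comp, (hΦ _ (Out.cast h v)).exists.choose_spec]
    exact Out.comp_congr (hΦ X u).exists.choose_spec.symm v

theorem eq_of_comp_eq_of_isCosieve {Z : Type*} [Category Z] {G H : DLens Z A} (F : DLens A B)
    (hF : IsCosieve F.get) (h : G.comp F = H.comp F) : G = H := by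
  obtain ⟨hd, hinj⟩ := hF
  have : F.get.Faithful := hd.faithful
  have hget : G.get = H.get :=
    Functor.eq_of_comp_eq_of_injective hinj (congrArg DLens.get h)
  refine ext_of_put hget fun c u => ?_
  calc G.put c u = (G.comp F).put c (mapOut F.get u) :=
        congrArg (G.put c) (F.put_eq_of_mapOut_eq hd rfl).symm
    _ = (H.comp F).put c (Out.cast _ (mapOut F.get u)) := put_congr h c _
    _ = H.put c (Out.cast _ u) :=
        congrArg (H.put c) (F.put_eq_of_mapOut_eq hd (mapOut_cast F.get _ u))

end DLens

@[ext]
structure KernelPair {A : Type*} [Category A] {B : Type*} [Category B] (Φ : A ⥤ B) where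
  l : A
  r : A
  eq : Φ.obj l = Φ.obj r

namespace KernelPair

variable {A : Type*} [Category A] {B : Type*} [Category B] {Φ : A ⥤ B}

@[ext]
structure Hom (p q : KernelPair Φ) where
  l : p.l ⟶ q.l
  r : p.r ⟶ q.r
  comm : Φ.map l ≫ eqToHom q.eq = eqToHom p.eq ≫ Φ.map r

instance : Category (KernelPair Φ) where
  Hom := Hom
  id p := ⟨𝟙 _, 𝟙 _, by simp⟩
  comp f g := ⟨f.l ≫ g.l, f.r ≫ g.r, by
    rw [Φ.map_comp, Φ.map_comp, Category.assoc, g.comm, reassoc_of% f.comm]⟩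

@[simp]
theorem comp_l {p q s : KernelPair Φ} (f : p ⟶ q) (g : q ⟶ s) : (f ≫ g).l = f.l ≫ g.l := rfl

@[simp]
theorem comp_r {p q s : KernelPair Φ} (f : p ⟶ q) (g : q ⟶ s) : (f ≫ g).r = f.r ≫ g.r := rfl

theorem eqToHom_l {p q : KernelPair Φ} (h : p = q) :
    (eqToHom h).l = eqToHom (congrArg KernelPair.l h) := by
  subst h
  rfl

theorem eqToHom_r {p q : KernelPair Φ} (h : p = q) :
    (eqToHom h).r = eqToHom (congrArg KernelPair.r h) := by
  subst h
  rfl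

variable (Φ) in
abbrev fst : KernelPair Φ ⥤ A where
  obj p := p.l
  map f := f.l

variable (Φ) in
abbrev snd : KernelPair Φ ⥤ A where
  obj p := p.r
  map f := f.r

variable (Φ) in
def swap : KernelPair Φ ⥤ KernelPair Φ where
  obj p := ⟨p.r, p.l, p.eq.symm⟩
  map {p q} f := ⟨f.r, f.l, by
    rw [← cancel_epi (eqToHom p.eq), ← reassoc_of% f.comm]
    simp⟩

theorem out_ext {p : KernelPair Φ} {x y : Out p} (hl : mapOut (fst Φ) x = mapOut (fst Φ) y)
    (hr : mapOut (snd Φ) x = mapOut (snd Φ) y) : x = y := by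
  have hobj : x.1 = y.1 := KernelPair.ext (congrArg Sigma.fst hl) (congrArg Sigma.fst hr)
  refine Out.ext hobj (Hom.ext ?_ ?_)
  · rw [comp_l, eqToHom_l]
    exact Out.snd_eq hl
  · rw [comp_r, eqToHom_r]
    exact Out.snd_eq hr

def outMk {p : KernelPair Φ} (v : Out p.l) (w : Out p.r)
    (h : Out.cast p.eq (mapOut Φ v) = mapOut Φ w) : Out p :=
  ⟨⟨v.1, w.1, congrArg Sigma.fst h⟩, ⟨v.2, w.2, by
    have h₂ := Out.snd_eq h
    dsimp only [Out.cast, mapOut] at h₂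
    rw [← h₂]
    simp⟩⟩

theorem fst_comp_eq_snd_comp : fst Φ ⋙ Φ = snd Φ ⋙ Φ :=
  CategoryTheory.Functor.ext (fun p => p.eq) fun p q f => by
    rw [Functor.comp_map, Functor.comp_map, ← reassoc_of% f.comm]
    simp

theorem injective_obj_of_fst_eq_snd (h : fst Φ = snd Φ) : Function.Injective Φ.obj :=
  fun X Y e => Functor.congr_obj h ⟨X, Y, e⟩

theorem mapOut_injective_of_fst_eq_snd (h : fst Φ = snd Φ) (X : A) :
    Function.Injective (mapOut Φ (X := X)) := fun v w e =>
  -- `v` and `w` are the two projections of one morphism out of `(X, X)`.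
  (Out.cast_rfl v).symm.trans
    (mapOut_congr h (outMk (p := ⟨X, X, rfl⟩) v w ((Out.cast_rfl _).trans e))).symm

variable (F : DLens A B)

def fstLens : DLens (KernelPair F.get) A where
  get := fst F.get
  put p u := outMk u (F.put p.r (Out.cast p.eq (mapOut F.get u))) (F.putGet _ _).symm
  putGet p u := rfl
  putId p := out_ext rfl <| by
    show F.put p.r (Out.cast p.eq (mapOut F.get (Out.id p.l))) = Out.id p.r
    rw [mapOut_id, Out.cast_id, F.putId]
  putPut p u v h := by
    have hv : Out.cast h v = v := Out.cast_rfl v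
    refine out_ext (by rw [hv]; rfl) ?_
    show F.put p.r (Out.cast p.eq (mapOut F.get (Out.comp (X := p.l) u v))) =
      (F.put p.r (Out.cast p.eq (mapOut F.get u))).comp
        (F.put _ (Out.cast _ (mapOut F.get (Out.cast h v))))
    rw [hv, mapOut_comp]
    exact F.putPut_cast p.eq _ _ _

variable (Φ) in
/-- `swap` is an involution on the nose, so it is a lens whose put is `swap` itself. -/
def swapLens : DLens (KernelPair Φ) (KernelPair Φ) where
  get := swap Φ
  put p u := mapOut (swap Φ) u
  putGet p u := rfl
  putId p := rfl
  putPut p u v h := by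
    have hv : Out.cast h v = v := Out.cast_rfl v
    rw [hv]
    rfl

def sndLens : DLens (KernelPair F.get) A := (swapLens F.get).comp (fstLens F)

theorem fstLens_comp_eq_sndLens_comp : (fstLens F).comp F = (sndLens F).comp F := by
  refine DLens.ext_of_put fst_comp_eq_snd_comp fun p (u : Out (F.get.obj p.l)) => out_ext ?_ ?_
  · show F.put p.l u = F.put p.l (Out.cast p.eq.symm (mapOut F.get (F.put p.r (Out.cast p.eq u))))
    rw [F.putGet, Out.cast_cast, Out.cast_rfl]
  · show F.put p.r (Out.cast p.eq (mapOut F.get (F.put p.l u))) = F.put p.r (Out.cast p.eq u)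
    rw [F.putGet]

end KernelPair

variable {A B : LensCat.{u}}

theorem isCosieve_of_mono (F : A ⟶ B) [Mono F] : IsCosieve (DLens.get F) := by
  have h : KernelPair.fstLens F = KernelPair.sndLens F :=
    Mono.right_cancellation (f := F) (Z := LensCat.of (Cat.of (KernelPair (DLens.get F))))
      (KernelPair.fstLens F) (KernelPair.sndLens F) (KernelPair.fstLens_comp_eq_sndLens_comp F)
  have hget : KernelPair.fst (DLens.get F) = KernelPair.snd (DLens.get F) := congrArg DLens.get h
  exact ⟨DLens.isDiscreteOpfibration_of_mapOut_injective F
    (KernelPair.mapOut_injective_of_fst_eq_snd hget), KernelPair.injective_obj_of_fst_eq_snd hget⟩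

theorem mono_of_isCosieve (F : A ⟶ B) (hF : IsCosieve (DLens.get F)) : Mono F :=
  ⟨fun _ _ h => DLens.eq_of_comp_eq_of_isCosieve F hF h⟩

end LensPaper

/-- A lens is a monomorphism in `Lens` iff its get functor is a
cosieve; moreover every cosieve carries exactly one lens structure, so the
forgetful functor restricts to a bijection between monic lenses and cosieves. -/
theorem mono_lens_iff_isCosieve :
    (∀ (A B : LensCat.{u}) (F : A ⟶ B), Mono F ↔ IsCosieve (DLens.get F)) ∧
    (∀ (A B : LensCat.{u}) (G : A.toCat ⟶ B.toCat), IsCosieve G.toFunctor →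
      ∃! F : A ⟶ B, DLens.get F = G.toFunctor) := by
  refine ⟨fun A B F => ⟨fun _ => isCosieve_of_mono F, mono_of_isCosieve F⟩,
    fun A B G hG => ⟨DLens.ofDiscreteOpfibration G.toFunctor hG.1, rfl, fun F hF => ?_⟩⟩
  exact (DLens.eq_of_get_eq hG.1 hF.symm).symm
end

section
/- Every functor between small categories that is an epimorphism in the category Cat of small categories and functors is surjective on objects. -/
universe u

open CategoryTheory CategoryTheory.Limits

open CategoryTheory CategoryTheory.Limits LensPaper

/-!
Taking the set of objects is left adjoint to forming the codiscrete category on a set, so it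
preserves epimorphisms, and the epimorphisms of sets are the surjections.
-/

universe v

namespace CategoryTheory.Cat

def codiscrete : Type u ⥤ Cat.{v, u} where
  obj α := Cat.of (ULiftHom.{v} (Codiscrete α))
  map f := (ULiftHom.down ⋙ Codiscrete.functorOfFun f ⋙ ULiftHom.up).toCatHom
  map_id _ := rfl
  map_comp _ _ := rfl

def objectsAdjCodiscrete : objects.{v, u} ⊣ codiscrete :=
  Adjunction.mkOfHomEquiv
    { homEquiv _ _ :=
        { toFun f := (Codiscrete.functor f ⋙ ULiftHom.up).toCatHom
          invFun G := ↾fun x => (ULiftHom.objDown.{u, v} (G.toFunctor.obj x)).as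
          left_inv _ := rfl
          right_inv _ := rfl }
      homEquiv_naturality_left_symm _ _ := rfl
      homEquiv_naturality_right _ _ := rfl }

instance : objects.{v, u}.IsLeftAdjoint := objectsAdjCodiscrete.isLeftAdjoint

theorem surjective_obj_of_epi {A B : Cat.{v, u}} (F : A ⟶ B) [Epi F] :
    Function.Surjective F.toFunctor.obj :=
  (epi_iff_surjective (objects.map F)).mp inferInstance

end CategoryTheory.Cat

/-- Every epimorphism in `Cat` is surjective on objects. -/
theorem epi_functor_surjective_on_objects (A B : Cat.{u, u}) (F : A ⟶ B)
    (hF : Epi F) : Function.Surjective F.toFunctor.obj :=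
  Cat.surjective_obj_of_epi F
end

section
/- Let F : A → B be a lens and let J̄₁, J̄₂ : B → C be the cokernel pair of its get functor U F in Cat (the pushout of U F along itself). Then J̄₁ and J̄₂ are cosieves, and the unique lenses J₁ and J₂ whose get functors are J̄₁ and J̄₂ satisfy J₁ ∘ F = J₂ ∘ F in the category Lens. -/
universe u

open CategoryTheory CategoryTheory.Limits

namespace LensPaper

/-!
The image `S` of the get functor of a lens `F` is closed under morphisms going out of it, and
since every morphism out of `F a` is the image of a morphism out of `a`, two functors agree after
precomposition with `F` exactly when they agree on all morphisms out of `S`. Hence the cokernel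
pair of `F` is `B` glued to itself along `S`, and its two injections are fully faithful,
injective on objects and have images closed under outgoing morphisms: they are cosieves.
Finally, `J₁` and `J₂` agree on morphisms out of `S`, so the lift along `J₂` of a morphism out
of `J₁ (F a)` is also its (unique) lift along `J₁`, which makes the puts of `J₁ ∘ F` and
`J₂ ∘ F` coincide.
-/

section Out

variable {C : Type*} [Category C] {D : Type*} [Category D] {E : Type*} [Category E]

theorem Out.ext_of_arrow_mk_eq {X : C} {u v : Out X} (h : Arrow.mk u.2 = Arrow.mk v.2) :
    u = v := by
  obtain ⟨Y, f⟩ := u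
  obtain ⟨Y', f'⟩ := v
  obtain ⟨-, rfl, rfl⟩ := (Arrow.mk_eq_mk_iff f f').1 h
  simp only [eqToHom_refl, Category.id_comp, Category.comp_id]
  rfl

theorem mapOut_comp_eq_comp (G : C ⥤ D) {X : C} {w : Out X} {u : Out (G.obj X)}
    (hw : mapOut G w = u) (w' : Out w.1) {v : Out u.1} (h : u.1 = G.obj w.1)
    (hw' : mapOut G w' = Out.cast h v) : mapOut G (w.comp w') = u.comp v := by
  subst hw
  rw [show Out.cast h v = v from Out.cast_rfl v] at hw'
  subst hw'
  exact congrArg (Sigma.mk _) (G.map_comp _ _)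

theorem mapOut_injective (G : C ⥤ D) [G.Faithful] (hG : Function.Injective G.obj) {X : C} :
    Function.Injective (mapOut G (X := X)) := by
  rintro ⟨Y, f⟩ ⟨Y', f'⟩ h
  obtain rfl : Y = Y' := hG (congrArg Sigma.fst h)
  obtain rfl : f = f' := G.map_injective (eq_of_heq (Sigma.mk.inj h).2)
  rfl

theorem IsCosieve.of_comp {J : C ⥤ D} {G : D ⥤ E} [G.Faithful] (hG : Function.Injective G.obj)
    (h : IsCosieve (J ⋙ G)) : IsCosieve J := by
  refine ⟨fun X u => ?_, fun X Y hXY => h.2 (congrArg G.obj hXY)⟩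
  obtain ⟨v, hv, huniq⟩ := h.1 X (mapOut G u)
  exact ⟨v, mapOut_injective G hG hv, fun w hw => huniq w (congrArg (mapOut G) hw)⟩

theorem isCosieve_of_full_of_faithful (K : C ⥤ D) [K.Full] [K.Faithful]
    (hK : Function.Injective K.obj)
    (hclosed : ∀ (X : C) (u : Out (K.obj X)), u.1 ∈ Set.range K.obj) : IsCosieve K := by
  refine ⟨fun X u => ?_, hK⟩
  obtain ⟨Y, hY⟩ := hclosed X u
  have hlift : mapOut K ⟨Y, K.preimage (u.2 ≫ eqToHom hY.symm)⟩ = u :=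
    Out.ext_of_arrow_mk_eq (by simp [mapOut])
  exact ⟨_, hlift, fun w hw => mapOut_injective K hK (hw.trans hlift.symm)⟩

end Out

section Agree

variable {C : Type*} [Category C] {D : Type*} [Category D]

def IsUpClosed (S : Set C) : Prop :=
  ∀ ⦃X Y : C⦄, X ∈ S → (X ⟶ Y) → Y ∈ S

def AgreeFrom (S : Set C) (G₁ G₂ : C ⥤ D) : Prop :=
  ∀ ⦃X Y : C⦄ (f : X ⟶ Y), X ∈ S → Arrow.mk (G₁.map f) = Arrow.mk (G₂.map f)

variable {S : Set C} {G₁ G₂ : C ⥤ D}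

theorem AgreeFrom.comp_eq_comp (h : AgreeFrom S G₁ G₂) {A : Type*} [Category A] (K : A ⥤ C)
    (hK : ∀ a, K.obj a ∈ S) : K ⋙ G₁ = K ⋙ G₂ :=
  Arrow.functor_ext fun _ _ f => h (K.map f) (hK _)

theorem AgreeFrom.mapOut_eq (h : AgreeFrom S G₁ G₂) {X : C} (hX : X ∈ S) (u : Out X)
    (e : G₂.obj X = G₁.obj X) : mapOut G₁ u = Out.cast e (mapOut G₂ u) :=
  Out.ext_of_arrow_mk_eq (by simpa [mapOut, Out.cast] using h u.2 hX)

theorem AgreeFrom.arrow_mk_cond_map (h : AgreeFrom S G₁ G₂) {t t' : Bool} {X Y : C}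
    (ht : t = t' ∨ X ∈ S) (f : X ⟶ Y) :
    Arrow.mk ((cond t G₂ G₁).map f) = Arrow.mk ((cond t' G₂ G₁).map f) := by
  rcases ht with rfl | hX
  · rfl
  · cases t <;> cases t'
    exacts [rfl, h f hX, (h f hX).symm, rfl]

theorem AgreeFrom.cond_obj_eq (h : AgreeFrom S G₁ G₂) {t t' : Bool} {X : C}
    (ht : t = t' ∨ X ∈ S) : (cond t G₂ G₁).obj X = (cond t' G₂ G₁).obj X :=
  congrArg Arrow.left (h.arrow_mk_cond_map ht (𝟙 X))

end Agree

/-- `C` glued to itself along an up-closed set `S` of objects: `tag = false` marks the first copy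
of `C`, `tag = true` the part of the second copy outside `S`. -/
@[ext]
structure Doubling {C : Type*} [Category C] {S : Set C} (hS : IsUpClosed S) where
  base : C
  tag : Bool
  not_mem_of_tag : tag = true → base ∉ S

namespace Doubling

variable {C : Type*} [Category C] {S : Set C} (hS : IsUpClosed S)

instance : Category (Doubling hS) where
  Hom X Y := {_f : X.base ⟶ Y.base // (Y.tag = true ↔ X.tag = true ∧ Y.base ∉ S)}
  id X := ⟨𝟙 _, fun h => ⟨h, X.not_mem_of_tag h⟩, And.left⟩
  comp f g := ⟨f.1 ≫ g.1, fun hZ => ⟨(f.2.1 (g.2.1 hZ).1).1, (g.2.1 hZ).2⟩,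
    fun ⟨hX, hZ⟩ => g.2.2 ⟨f.2.2 ⟨hX, fun hY => hZ (hS hY g.1)⟩, hZ⟩⟩
  id_comp f := Subtype.ext (Category.id_comp f.1)
  comp_id f := Subtype.ext (Category.comp_id f.1)
  assoc f g h := Subtype.ext (Category.assoc f.1 g.1 h.1)

variable {hS}

theorem hom_ext {X Y : Doubling hS} {f g : X ⟶ Y} (h : f.1 = g.1) : f = g :=
  Subtype.ext h

@[simp]
theorem id_val (X : Doubling hS) : (𝟙 X : X ⟶ X).1 = 𝟙 X.base := rfl

@[simp]
theorem comp_val {X Y Z : Doubling hS} (f : X ⟶ Y) (g : Y ⟶ Z) : (f ≫ g).1 = f.1 ≫ g.1 := rfl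

theorem arrow_mk_eq {X Y X' Y' : Doubling hS} {f : X ⟶ Y} {f' : X' ⟶ Y'} (hX : X = X')
    (hY : Y = Y') (h : f.1 ≍ f'.1) : Arrow.mk f = Arrow.mk f' := by
  subst hX hY
  rw [hom_ext (eq_of_heq h)]

theorem tag_eq_false {X Y : Doubling hS} (f : X ⟶ Y) (hX : X.tag = false) : Y.tag = false := by
  simpa [hX] using f.2

theorem tag_eq_or_mem {X Y : Doubling hS} (f : X ⟶ Y) : X.tag = Y.tag ∨ Y.base ∈ S := by
  by_cases hY : Y.base ∈ S
  · exact Or.inr hY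
  · exact Or.inl (Bool.eq_iff_iff.2 (by simpa [hY] using f.2.symm))

variable (hS)

def inl : C ⥤ Doubling hS where
  obj X := ⟨X, false, fun h => absurd h Bool.false_ne_true⟩
  map f := ⟨f, by simp⟩

open Classical in
noncomputable def inr : C ⥤ Doubling hS where
  obj X := ⟨X, decide (X ∉ S), of_decide_eq_true⟩
  map {X Y} f := ⟨f, by
    simp only [decide_eq_true_eq]
    exact ⟨fun hY => ⟨fun hX => hY (hS hX f), hY⟩, And.right⟩⟩

variable {hS}

theorem eq_inl_obj_iff {X : Doubling hS} : X = (inl hS).obj X.base ↔ X.tag = false :=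
  ⟨fun h => congrArg tag h, fun h => Doubling.ext rfl h⟩

theorem eq_inr_obj_iff {X : Doubling hS} :
    X = (inr hS).obj X.base ↔ X.tag = true ∨ X.base ∈ S := by
  constructor
  · intro h
    by_cases hX : X.base ∈ S
    · exact Or.inr hX
    · exact Or.inl (h ▸ by simp [inr, hX])
  · rintro (hX | hX)
    · exact Doubling.ext rfl (by simp [inr, hX, X.not_mem_of_tag hX])
    · exact Doubling.ext rfl (by
        cases hX' : X.tag
        · simp [inr, hX]
        · exact absurd hX (X.not_mem_of_tag hX'))

theorem tag_or_mem_of_hom {X Y : Doubling hS} (f : X ⟶ Y) (hX : X.tag = true ∨ X.base ∈ S) :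
    Y.tag = true ∨ Y.base ∈ S := by
  rcases tag_eq_or_mem f with hXY | hY
  · rcases hX with hX | hX
    · exact Or.inl (hXY ▸ hX)
    · exact Or.inr (hS hX f.1)
  · exact Or.inr hY

theorem inr_obj_eq_inl_obj {X : C} (hX : X ∈ S) : (inr hS).obj X = (inl hS).obj X :=
  Doubling.ext rfl (by simp [inr, inl, hX])

instance : (inl hS).Full := ⟨fun f => ⟨f.1, rfl⟩⟩
instance : (inl hS).Faithful := ⟨fun h => congrArg Subtype.val h⟩
instance : (inr hS).Full := ⟨fun f => ⟨f.1, rfl⟩⟩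
instance : (inr hS).Faithful := ⟨fun h => congrArg Subtype.val h⟩

theorem isCosieve_inl : IsCosieve (inl hS) :=
  isCosieve_of_full_of_faithful _ (fun _ _ h => congrArg base h)
    fun _ u => ⟨u.1.base, (eq_inl_obj_iff.2 (tag_eq_false u.2 rfl)).symm⟩

theorem isCosieve_inr : IsCosieve (inr hS) :=
  isCosieve_of_full_of_faithful _ (fun _ _ h => congrArg base h)
    fun _ u => ⟨u.1.base, (eq_inr_obj_iff.2 (tag_or_mem_of_hom u.2 (eq_inr_obj_iff.1 rfl))).symm⟩

theorem agreeFrom_inl_inr : AgreeFrom S (inl hS) (inr hS) := fun _ _ f hX =>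
  arrow_mk_eq (inr_obj_eq_inl_obj hX).symm (inr_obj_eq_inl_obj (hS hX f)).symm HEq.rfl

theorem arrow_mk_eq_inl_or_inr {X Y : Doubling hS} (f : X ⟶ Y) :
    Arrow.mk f = Arrow.mk ((inl hS).map f.1) ∨ Arrow.mk f = Arrow.mk ((inr hS).map f.1) := by
  rcases X.tag.eq_false_or_eq_true.symm with hX | hX
  · exact Or.inl (arrow_mk_eq (eq_inl_obj_iff.2 hX) (eq_inl_obj_iff.2 (tag_eq_false f hX)) HEq.rfl)
  · exact Or.inr (arrow_mk_eq (eq_inr_obj_iff.2 (Or.inl hX))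
      (eq_inr_obj_iff.2 (tag_or_mem_of_hom f (Or.inl hX))) HEq.rfl)

variable {D : Type*} [Category D]

theorem functor_ext {N N' : Doubling hS ⥤ D} (h₁ : inl hS ⋙ N = inl hS ⋙ N')
    (h₂ : inr hS ⋙ N = inr hS ⋙ N') : N = N' := by
  refine Arrow.functor_ext fun X Y f => ?_
  rcases arrow_mk_eq_inl_or_inr f with hf | hf <;> rw [hf]
  · exact congrArg (fun K => Arrow.mk (K.map f.1)) h₁
  · exact congrArg (fun K => Arrow.mk (K.map f.1)) h₂

variable {G₁ G₂ : C ⥤ D}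

def desc (h : AgreeFrom S G₁ G₂) : Doubling hS ⥤ D where
  obj X := (cond X.tag G₂ G₁).obj X.base
  map {X Y} f := (cond X.tag G₂ G₁).map f.1 ≫ eqToHom (h.cond_obj_eq (tag_eq_or_mem f))
  map_id X := by simp
  map_comp {X Y Z} f g := by
    obtain ⟨_, _, hg⟩ := (Arrow.mk_eq_mk_iff _ _).1 (h.arrow_mk_cond_map (tag_eq_or_mem f) g.1)
    simp only [comp_val, Functor.map_comp, Category.assoc, hg]
    simp

theorem inl_comp_desc (h : AgreeFrom S G₁ G₂) : inl hS ⋙ desc h = G₁ :=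
  Arrow.functor_ext fun _ _ f => by simp [desc, inl]

theorem inr_comp_desc (h : AgreeFrom S G₁ G₂) : inr hS ⋙ desc h = G₂ := by
  refine Arrow.functor_ext fun X _ f => ?_
  have hX : ((inr hS).obj X).tag = true ∨ X ∈ S := by by_cases hX : X ∈ S <;> simp [inr, hX]
  simpa [desc, inr] using h.arrow_mk_cond_map hX f

end Doubling

namespace DLens

variable {A : Type*} [Category A] {B : Type*} [Category B] {C : Type*} [Category C]

theorem ext {M N : DLens A B} (hg : M.get = N.get)
    (hp : ∀ (X : A) (u : Out (M.get.obj X)),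
      M.put X u = N.put X (Out.cast (Functor.congr_obj hg X) u)) : M = N := by
  obtain ⟨G, p, _, _, _⟩ := M
  obtain ⟨G', p', _, _, _⟩ := N
  obtain rfl : G = G' := hg
  obtain rfl : p = p' := funext fun X => funext fun u => (hp X u).trans (by rw [Out.cast_rfl])
  rfl

noncomputable def ofIsDiscreteOpfibration (G : B ⥤ C) (hG : IsDiscreteOpfibration G) :
    DLens B C where
  get := G
  put X u := (hG X u).exists.choose
  putGet X u := (hG X u).exists.choose_spec
  putId X := (hG X _).unique (hG X _).exists.choose_spec
    (congrArg (Sigma.mk _) (G.map_id X))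
  putPut X u _ h := (hG X _).unique (hG X _).exists.choose_spec
    (mapOut_comp_eq_comp G (hG X u).exists.choose_spec _ h (hG _ _).exists.choose_spec)

theorem existsUnique_get_eq {G : B ⥤ C} (hG : IsDiscreteOpfibration G) :
    ∃! L : DLens B C, L.get = G := by
  refine ⟨ofIsDiscreteOpfibration G hG, rfl, fun L hL => ext hL fun X u => ?_⟩
  refine (hG X _).unique ?_ (hG X _).exists.choose_spec
  subst hL
  exact (L.putGet X u).trans (Out.cast_rfl u).symm

theorem put_eq_put_of_agreeFrom {L₁ L₂ : DLens B C} (hL₁ : IsDiscreteOpfibration L₁.get)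
    {S : Set B} (h : AgreeFrom S L₁.get L₂.get) {X : B} (hX : X ∈ S) (u : Out (L₁.get.obj X))
    (e : L₁.get.obj X = L₂.get.obj X) : L₁.put X u = L₂.put X (Out.cast e u) := by
  refine (hL₁ X u).unique (L₁.putGet X u) ?_
  rw [h.mapOut_eq hX _ e.symm, L₂.putGet, Out.cast_cast]
  exact Out.cast_rfl u

variable (F : DLens A B)

theorem isUpClosed_range : IsUpClosed (Set.range F.get.obj) := by
  rintro _ Y ⟨a, rfl⟩ g
  exact ⟨(F.put a ⟨Y, g⟩).1, congrArg Sigma.fst (F.putGet a ⟨Y, g⟩)⟩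

theorem comp_eq_comp_iff_agreeFrom {D : Type*} [Category D] {G₁ G₂ : B ⥤ D} :
    F.get ⋙ G₁ = F.get ⋙ G₂ ↔ AgreeFrom (Set.range F.get.obj) G₁ G₂ := by
  refine ⟨fun h => ?_, fun h => h.comp_eq_comp F.get fun a => ⟨a, rfl⟩⟩
  rintro _ Y g ⟨a, rfl⟩
  have hg : Arrow.mk (F.get.map (F.put a ⟨Y, g⟩).2) = Arrow.mk g :=
    congrArg (fun u : Out _ => Arrow.mk u.2) (F.putGet a ⟨Y, g⟩)
  change G₁.mapArrow.obj (Arrow.mk g) = G₂.mapArrow.obj (Arrow.mk g)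
  rw [← hg]
  exact congrArg (fun K => Arrow.mk (K.map (F.put a ⟨Y, g⟩).2)) h

theorem comp_eq_comp_of_isDiscreteOpfibration {L₁ L₂ : DLens B C}
    (hL₁ : IsDiscreteOpfibration L₁.get) (h : F.get ⋙ L₁.get = F.get ⋙ L₂.get) :
    F.comp L₁ = F.comp L₂ :=
  ext h fun a u => congrArg (F.put a) (put_eq_put_of_agreeFrom hL₁
    (F.comp_eq_comp_iff_agreeFrom.1 h) ⟨a, rfl⟩ u _)

end DLens

theorem DLens.isPushout_doubling {A B : Type u} [Category.{u} A] [Category.{u} B]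
    (F : DLens A B) :
    IsPushout F.get.toCatHom F.get.toCatHom (Doubling.inl F.isUpClosed_range).toCatHom
      (Doubling.inr F.isUpClosed_range).toCatHom := by
  have hw : F.get ⋙ Doubling.inl F.isUpClosed_range =
      F.get ⋙ Doubling.inr F.isUpClosed_range :=
    F.comp_eq_comp_iff_agreeFrom.2 Doubling.agreeFrom_inl_inr
  have agree (s : PushoutCocone F.get.toCatHom F.get.toCatHom) :
      AgreeFrom (Set.range F.get.obj) s.inl.toFunctor s.inr.toFunctor :=
    F.comp_eq_comp_iff_agreeFrom.1 (congrArg Cat.Hom.toFunctor s.condition)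
  refine IsPushout.of_isColimit (c := PushoutCocone.mk _ _ (congrArg Functor.toCatHom hw)) ?_
  exact PushoutCocone.IsColimit.mk _
    (fun s => (Doubling.desc (hS := F.isUpClosed_range) (agree s)).toCatHom)
    (fun s => Cat.ext (Doubling.inl_comp_desc (agree s)))
    (fun s => Cat.ext (Doubling.inr_comp_desc (agree s)))
    fun s m h₁ h₂ => Cat.ext (Doubling.functor_ext
      ((congrArg Cat.Hom.toFunctor h₁).trans (Doubling.inl_comp_desc (agree s)).symm)
      ((congrArg Cat.Hom.toFunctor h₂).trans (Doubling.inr_comp_desc (agree s)).symm))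

theorem IsCosieve.of_comp_iso {B C D : Cat.{u, u}} {J : B ⟶ C} {K : B ⟶ D} (e : C ≅ D)
    (h : J ≫ e.hom = K) (hK : IsCosieve K.toFunctor) : IsCosieve J.toFunctor :=
  have : e.hom.toFunctor.Faithful := (Cat.equivOfIso e).faithful_functor
  (h ▸ hK : IsCosieve (J ≫ e.hom).toFunctor).of_comp
    (Function.LeftInverse.injective (g := e.inv.toFunctor.obj)
      fun X => congrArg (fun K : C ⟶ C => K.toFunctor.obj X) e.hom_inv_id)

end LensPaper
open CategoryTheory CategoryTheory.Limits LensPaper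

/-- Let `F : A ⟶ B` be a lens and let `J1, J2 : B ⟶ C` be the
cokernel pair of its get functor in `Cat` (the pushout of `U F` along itself).
Then `J1` and `J2` are cosieves, each carries a unique lens structure, and the
resulting lenses `L1`, `L2` satisfy `L1 ∘ F = L2 ∘ F` in `Lens`. -/
theorem cokernel_pair_of_get_is_cosieve (A B : LensCat.{u}) (F : A ⟶ B)
    (C : Cat.{u, u}) (J1 J2 : B.toCat ⟶ C)
    (hpo : IsPushout (lensForget.map F) (lensForget.map F) J1 J2) :
    IsCosieve J1.toFunctor ∧ IsCosieve J2.toFunctor ∧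
    (∃! L : B ⟶ LensCat.of C, DLens.get L = J1.toFunctor) ∧
    (∃! L : B ⟶ LensCat.of C, DLens.get L = J2.toFunctor) ∧
    (∀ (L1 L2 : B ⟶ LensCat.of C), DLens.get L1 = J1.toFunctor → DLens.get L2 = J2.toFunctor →
      F ≫ L1 = F ≫ L2) := by
  have hmodel := DLens.isPushout_doubling F
  have hJ1 : IsCosieve J1.toFunctor := IsCosieve.of_comp_iso _
    (hpo.inl_isoIsPushout_hom _ _ hmodel) Doubling.isCosieve_inl
  have hJ2 : IsCosieve J2.toFunctor := IsCosieve.of_comp_iso _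
    (hpo.inr_isoIsPushout_hom _ _ hmodel) Doubling.isCosieve_inr
  refine ⟨hJ1, hJ2, DLens.existsUnique_get_eq hJ1.1, DLens.existsUnique_get_eq hJ2.1,
    fun L1 L2 h1 h2 => F.comp_eq_comp_of_isDiscreteOpfibration (h1 ▸ hJ1.1) ?_⟩
  rw [h1, h2]
  exact congrArg Cat.Hom.toFunctor hpo.w
end
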